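/- arXiv:2503.16891 — 3 statements merged into one kernel-verified Lean document; each statement's English description precedes it below -/
import Mathlib

section
/- Let Σ be an alphabet and let S, K, N ⊆ Σ^ω be languages of infinite words with L(S) ⊆ L(K) (here N plays the role of L(¬φ)). For any language B ⊆ Σ^ω satisfying N ∩ K ⊆ B ⊆ N ∪ (Σ^ω \ K), we have S ∩ N = ∅ if and only if S ∩ B = ∅. -/
theorem Set.inter_eq_inter_of_subset_of_agree_on {β : Type*} {S K N B : Set β} (hSK : S ⊆ K)
    (hlow : N ∩ K ⊆ B) (hhigh : B ⊆ N ∪ Kᶜ) : S ∩ B = S ∩ N := by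
  refine Set.Subset.antisymm ?_ ?_
  · rintro x ⟨hxS, hxB⟩
    exact ⟨hxS, (hhigh hxB).resolve_right fun hxK => hxK (hSK hxS)⟩
  · rintro x ⟨hxS, hxN⟩
    exact ⟨hxS, hlow ⟨hxN, hSK hxS⟩⟩

/-- Theorem 1 of the paper: given prior knowledge `K` over-approximating the
system `S` (`S ⊆ K`), the negated-property language `N` may be replaced by any
language `B` between the restriction `N ∩ K` and the relaxation `N ∪ Kᶜ`
without changing the outcome of the emptiness test. -/
theorem emptiness_given_knowledge {α : Type*} (S K N B : Set (ℕ → α))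
    (hSK : S ⊆ K) (hlow : N ∩ K ⊆ B) (hhigh : B ⊆ N ∪ (Set.univ \ K)) :
    S ∩ N = ∅ ↔ S ∩ B = ∅ := by
  rw [← Set.compl_eq_univ_sdiff] at hhigh
  rw [Set.inter_eq_inter_of_subset_of_agree_on hSK hlow hhigh]
end

section
/- Let Σ be an alphabet, ~ the stutter-equivalence relation on ω-words over Σ, and ss(L) the stutter-sensitive part of a language L. Let L, K ⊆ Σ^ω be languages. If ss(L) ∩ K = ∅, then (L \ ss(L)) ∩ K = L ∩ K. Moreover, the language L \ ss(L) is stutter-insensitive. (SI-restriction: when the stutter-sensitive words of L lie outside the knowledge K, removing them yields a stutter-insensitive language with the same intersection with K.) -/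
variable {α : Type*}

/-- One-step duplication of the letter of `w` at position `i`. -/
def dup (w : ℕ → α) (i : ℕ) : ℕ → α := fun n => if n ≤ i then w n else w (n - 1)

/-- Stutter equivalence: the equivalence closure of one-step duplication. -/
def StutterEquiv (w w' : ℕ → α) : Prop :=
  Relation.EqvGen (fun u v => ∃ i, v = dup u i) w w'

/-- A language is stutter-insensitive if it is closed under stutter equivalence. -/
def StutterInsensitive (L : Set (ℕ → α)) : Prop :=
  ∀ w w', w ∈ L → StutterEquiv w w' → w' ∈ L

/-- The stutter closure of a language. -/
def stutterClosure (L : Set (ℕ → α)) : Set (ℕ → α) :=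
  {w | ∃ w' ∈ L, StutterEquiv w w'}

/-- The stutter-sensitive part of a language. -/
def stutterSensitivePart (L : Set (ℕ → α)) : Set (ℕ → α) :=
  {w | w ∈ L ∧ ∃ w', StutterEquiv w w' ∧ w' ∉ L}

theorem mem_diff_stutterSensitivePart_iff {L : Set (ℕ → α)} {w : ℕ → α} :
    w ∈ L \ stutterSensitivePart L ↔ ∀ w', StutterEquiv w w' → w' ∈ L := by
  constructor
  · rintro ⟨hw, hw_insensitive⟩ w' hww'
    by_contra hw'
    exact hw_insensitive ⟨hw, w', hww', hw'⟩
  · intro hclass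
    exact ⟨hclass w (Relation.EqvGen.refl w), fun ⟨_, w', hww', hw'⟩ => hw' (hclass w' hww')⟩

theorem stutterInsensitive_diff_stutterSensitivePart (L : Set (ℕ → α)) :
    StutterInsensitive (L \ stutterSensitivePart L) := by
  intro w w' hw hww'
  rw [mem_diff_stutterSensitivePart_iff] at hw ⊢
  exact fun u hw'u => hw u (Relation.EqvGen.trans _ _ _ hww' hw'u)

/-- SI-restriction: if the stutter-sensitive words of `L` lie outside the
knowledge `K`, removing them yields a stutter-insensitive language with the
same intersection with `K`. -/
theorem si_restriction (L K : Set (ℕ → α))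
    (h : stutterSensitivePart L ∩ K = ∅) :
    (L \ stutterSensitivePart L) ∩ K = L ∩ K ∧
      StutterInsensitive (L \ stutterSensitivePart L) := by
  refine ⟨?_, stutterInsensitive_diff_stutterSensitivePart L⟩
  rw [Set.sdiff_inter_right_comm, sdiff_eq_self_iff_disjoint]
  exact Set.disjoint_iff_inter_eq_empty.2 h |>.mono_right Set.inter_subset_right
end

section
/- Let A and A_K be TGBAs over the same alphabet of valuations with disjoint acceptance mark sets. For a transition t = (q,f,a,q') of A, let TG(t) be the union of the labels f_k over all transitions (k, f_k, a_k, k') of A_K such that the product transition ((q,k), f ∩ f_k, a ∪ a_k, (q',k')) occurs in some accepting run of A ⊗ A_K. Let B be the TGBA obtained from A by replacing t with (q, f ∩ TG(t), a, q'). Then L(B ⊗ A_K) = L(A ⊗ A_K). (Restricting a transition label to its transition guarantee does not change the product language.) -/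
/-!
Replacing the label `f` of `t` by `f ∩ TG(t)` only shrinks it, so every run of `B ⊗ A_K` is
a run of `A ⊗ A_K` with some labels enlarged. Conversely, whenever an accepting run of
`A ⊗ A_K` takes `t` together with an `A_K`-transition labelled `f_k`, that product transition
occurs in an accepting run, so `f_k ⊆ TG(t)` and `f ∩ f_k = (f ∩ TG(t)) ∩ f_k`: the run is
literally a run of `B ⊗ A_K`.
-/

/-- A transition-based generalized Büchi automaton (TGBA) over letters `V`,
with state type `Q` and acceptance-mark type `M`.  A transition
`(q, f, a, q')` goes from `q` to `q'`, is labeled by the set `f` of letters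
that satisfy its label, and carries the set `a` of acceptance marks. -/
structure TGBA (V : Type*) (Q : Type*) (M : Type*) where
  init : Q
  Acc : Set M
  trans : Set (Q × Set V × Set M × Q)

namespace TGBA

variable {V Q Q₁ Q₂ M : Type*}

/-- `q, f, a` form a run of `A` on the word `w`. -/
def IsRun (A : TGBA V Q M) (w : ℕ → V) (q : ℕ → Q) (f : ℕ → Set V)
    (a : ℕ → Set M) : Prop :=
  q 0 = A.init ∧ ∀ i, (q i, f i, a i, q (i + 1)) ∈ A.trans ∧ w i ∈ f i

/-- An accepting run visits each acceptance mark infinitely often. -/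
def IsAccRun (A : TGBA V Q M) (w : ℕ → V) (q : ℕ → Q) (f : ℕ → Set V)
    (a : ℕ → Set M) : Prop :=
  A.IsRun w q f a ∧ ∀ m ∈ A.Acc, ∀ N, ∃ i, N ≤ i ∧ m ∈ a i

/-- The language of `A`: words on which `A` has an accepting run. -/
def Lang (A : TGBA V Q M) : Set (ℕ → V) :=
  {w | ∃ q f a, A.IsAccRun w q f a}

/-- Synchronized product of two TGBAs. -/
def prod (A₁ : TGBA V Q₁ M) (A₂ : TGBA V Q₂ M) : TGBA V (Q₁ × Q₂) M where
  init := (A₁.init, A₂.init)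
  Acc := A₁.Acc ∪ A₂.Acc
  trans := {t | ∃ q₁ f₁ a₁ q₁' q₂ f₂ a₂ q₂',
    (q₁, f₁, a₁, q₁') ∈ A₁.trans ∧ (q₂, f₂, a₂, q₂') ∈ A₂.trans ∧
    t = ((q₁, q₂), f₁ ∩ f₂, a₁ ∪ a₂, (q₁', q₂'))}

/-- The state `s` occurs at some position of some accepting run of `A`. -/
def OccursState (A : TGBA V Q M) (s : Q) : Prop :=
  ∃ w q f a, A.IsAccRun w q f a ∧ ∃ i, q i = s

/-- The transition `t` occurs at some position of some accepting run of `A`. -/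
def OccursTrans (A : TGBA V Q M) (t : Q × Set V × Set M × Q) : Prop :=
  ∃ w q f a, A.IsAccRun w q f a ∧ ∃ i, (q i, f i, a i, q (i + 1)) = t

end TGBA

/-- Knowledge-based state guarantee: the union of the labels of all
transitions of `AK` leaving a state `k` such that `(q, k)` occurs in some
accepting run of the product `A ⊗ AK`. -/
def TGBA.SG {V Q₁ Q₂ M : Type*} (A : TGBA V Q₁ M) (AK : TGBA V Q₂ M)
    (q : Q₁) : Set V :=
  {v | ∃ k fk ak k', (A.prod AK).OccursState (q, k) ∧
    (k, fk, ak, k') ∈ AK.trans ∧ v ∈ fk}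

/-- Knowledge-based transition guarantee of `t = (q, f, a, q')`: the union of
the labels `f_k` over all transitions `(k, f_k, a_k, k')` of `AK` such that
the product transition `((q,k), f ∩ f_k, a ∪ a_k, (q',k'))` occurs in some
accepting run of `A ⊗ AK`. -/
def TGBA.TG {V Q₁ Q₂ M : Type*} (A : TGBA V Q₁ M) (AK : TGBA V Q₂ M)
    (t : Q₁ × Set V × Set M × Q₁) : Set V :=
  {v | ∃ k fk ak k', (k, fk, ak, k') ∈ AK.trans ∧
    (A.prod AK).OccursTrans
      ((t.1, k), t.2.1 ∩ fk, t.2.2.1 ∪ ak, (t.2.2.2, k')) ∧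
    v ∈ fk}

namespace TGBA

variable {V Q Q₂ M : Type*}

/-- Every transition of `B` is a transition of `A` with its label shrunk. -/
def Dominates (A B : TGBA V Q M) : Prop :=
  ∀ ⦃p g b p'⦄, (p, g, b, p') ∈ B.trans → ∃ g', g ⊆ g' ∧ (p, g', b, p') ∈ A.trans

theorem OccursTrans.mem_trans {A : TGBA V Q M} {t : Q × Set V × Set M × Q}
    (h : A.OccursTrans t) : t ∈ A.trans := by
  obtain ⟨w, q, f, a, hrun, i, rfl⟩ := h
  exact (hrun.1.2 i).1

theorem Dominates.prod {A B : TGBA V Q M} (h : A.Dominates B) (C : TGBA V Q₂ M) :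
    (A.prod C).Dominates (B.prod C) := by
  rintro ⟨p, r⟩ g₀ b₀ ⟨p', r'⟩ ⟨p₁, g, b, p₁', r₁, g₂, b₂, r₁', hB, hC, heq⟩
  simp only [Prod.mk.injEq] at heq
  obtain ⟨⟨rfl, rfl⟩, rfl, rfl, rfl, rfl⟩ := heq
  obtain ⟨g', hg, hA⟩ := h hB
  exact ⟨g' ∩ g₂, Set.inter_subset_inter_left _ hg, _, g', _, _, _, g₂, _, _, hA, hC, rfl⟩

theorem exists_isAccRun_of_dominates {A B : TGBA V Q M} (hAB : A.Dominates B)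
    (hinit : B.init = A.init) (hAcc : A.Acc ⊆ B.Acc) {w : ℕ → V} {q : ℕ → Q}
    {f : ℕ → Set V} {a : ℕ → Set M} (h : B.IsAccRun w q f a) :
    ∃ f', A.IsAccRun w q f' a := by
  obtain ⟨⟨h0, hstep⟩, hacc⟩ := h
  choose f' hf' hA using fun i => hAB (hstep i).1
  exact ⟨f', ⟨h0.trans hinit, fun i => ⟨hA i, hf' i (hstep i).2⟩⟩,
    fun m hm => hacc m (hAcc hm)⟩

theorem lang_subset_of_dominates {A B : TGBA V Q M} (hAB : A.Dominates B)
    (hinit : B.init = A.init) (hAcc : A.Acc ⊆ B.Acc) : B.Lang ⊆ A.Lang := by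
  rintro w ⟨q, f, a, h⟩
  obtain ⟨f', h'⟩ := exists_isAccRun_of_dominates hAB hinit hAcc h
  exact ⟨q, f', a, h'⟩

theorem lang_subset_of_occursTrans_mem {A B : TGBA V Q M} (hinit : B.init = A.init)
    (hAcc : B.Acc ⊆ A.Acc) (h : ∀ t, A.OccursTrans t → t ∈ B.trans) :
    A.Lang ⊆ B.Lang := by
  rintro w ⟨q, f, a, hrun⟩
  refine ⟨q, f, a, ⟨hrun.1.1.trans hinit.symm, fun i => ⟨?_, (hrun.1.2 i).2⟩⟩,
    fun m hm => hrun.2 m (hAcc hm)⟩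
  exact h _ ⟨w, q, f, a, hrun, i, rfl⟩

section Restrict

variable {A B : TGBA V Q M} {q q' : Q} {f g : Set V} {a : Set M}

theorem dominates_of_trans_eq_restrict (ht : (q, f, a, q') ∈ A.trans)
    (htrans : B.trans = (A.trans \ {(q, f, a, q')}) ∪ {(q, f ∩ g, a, q')}) :
    A.Dominates B := by
  intro p h b p' hB
  rw [htrans] at hB
  rcases hB with ⟨hA, -⟩ | hB
  · exact ⟨h, subset_rfl, hA⟩
  · simp only [Set.mem_singleton_iff, Prod.mk.injEq] at hB
    obtain ⟨rfl, rfl, rfl, rfl⟩ := hB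
    exact ⟨f, Set.inter_subset_left, ht⟩

theorem mem_prod_trans_of_occursTrans (AK : TGBA V Q₂ M)
    (htrans : B.trans = (A.trans \ {(q, f, a, q')}) ∪
      {(q, f ∩ A.TG AK (q, f, a, q'), a, q')})
    {t : (Q × Q₂) × Set V × Set M × (Q × Q₂)} (ht : (A.prod AK).OccursTrans t) :
    t ∈ (B.prod AK).trans := by
  obtain ⟨p, g₁, b₁, p', r, g₂, b₂, r', hA, hK, rfl⟩ := ht.mem_trans
  by_cases hc : (p, g₁, b₁, p') = (q, f, a, q')
  · simp only [Prod.mk.injEq] at hc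
    obtain ⟨rfl, rfl, rfl, rfl⟩ := hc
    have hTG : g₂ ⊆ A.TG AK (p, g₁, b₁, p') := fun v hv => ⟨r, g₂, b₂, r', hK, ht, hv⟩
    refine ⟨p, g₁ ∩ A.TG AK (p, g₁, b₁, p'), b₁, p', r, g₂, b₂, r',
      htrans ▸ Or.inr rfl, hK, ?_⟩
    rw [Set.inter_assoc, Set.inter_eq_right.mpr hTG]
  · exact ⟨p, g₁, b₁, p', r, g₂, b₂, r', htrans ▸ Or.inl ⟨hA, hc⟩, hK, rfl⟩

end Restrict

end TGBA

theorem lang_prod_restrict_to_TG_general {V Q₁ Q₂ M : Type*}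
    (A : TGBA V Q₁ M) (AK : TGBA V Q₂ M)
    (q q' : Q₁) (f : Set V) (a : Set M)
    (ht : (q, f, a, q') ∈ A.trans)
    (B : TGBA V Q₁ M) (hinit : B.init = A.init) (hAcc : B.Acc = A.Acc)
    (htrans : B.trans = (A.trans \ {(q, f, a, q')}) ∪
      {(q, f ∩ A.TG AK (q, f, a, q'), a, q')}) :
    (B.prod AK).Lang = (A.prod AK).Lang := by
  have hinit' : (B.prod AK).init = (A.prod AK).init := by simp [TGBA.prod, hinit]
  have hAcc' : (B.prod AK).Acc = (A.prod AK).Acc := by simp [TGBA.prod, hAcc]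
  have hdom : (A.prod AK).Dominates (B.prod AK) :=
    (TGBA.dominates_of_trans_eq_restrict ht htrans).prod AK
  exact (TGBA.lang_subset_of_dominates hdom hinit' hAcc'.ge).antisymm
    (TGBA.lang_subset_of_occursTrans_mem hinit' hAcc'.le
      fun _ => TGBA.mem_prod_trans_of_occursTrans AK htrans)

/-- Restricting a transition label to its transition guarantee does not change
the product language. -/
theorem lang_prod_restrict_to_TG {V Q₁ Q₂ M : Type*}
    (A : TGBA V Q₁ M) (AK : TGBA V Q₂ M) (hdisj : Disjoint A.Acc AK.Acc)
    (q q' : Q₁) (f : Set V) (a : Set M)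
    (ht : (q, f, a, q') ∈ A.trans)
    (B : TGBA V Q₁ M) (hinit : B.init = A.init) (hAcc : B.Acc = A.Acc)
    (htrans : B.trans = (A.trans \ {(q, f, a, q')}) ∪
      {(q, f ∩ A.TG AK (q, f, a, q'), a, q')}) :
    (B.prod AK).Lang = (A.prod AK).Lang :=
  lang_prod_restrict_to_TG_general A AK q q' f a ht B hinit hAcc htrans
end
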